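/- arXiv:2205.08199 — 4 statements merged into one kernel-verified Lean document; each statement's English description precedes it below -/
import Mathlib

section
/- The function g(α) = (1/(2π))(√(1−α²) + α(π − arccos α)) admits the Taylor expansion g(α) = 1/(2π) + α/4 + Σ_{k≥1} (1/(2π)) (((2k−3)!!)² / (2k)!) α^{2k}, valid for all α ∈ [−1,1]. -/
open Real

noncomputable def gker (α : ℝ) : ℝ :=
  (1 / (2 * π)) * (Real.sqrt (1 - α ^ 2) + α * (π - Real.arccos α))

/-!
Write `c k = Ring.multichoose (1/2) k = ((2k-1)!!)² / (2k)!`: by the binomial series,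
`1 / √(1 - x²) = ∑ c k x^(2k)` on `(-1, 1)`. Since `arcsin' = 1 / √(1 - x²)` and
`(√(1 - x²) + x arcsin x)' = arcsin x`, integrating this series termwise twice gives
`√(1 - x²) + x arcsin x = 1 + ∑ c k x^(2k+2) / ((2k+1)(2k+2))` on `(-1, 1)`. These terms are
bounded by `1 / (k+1)²` on `[-1, 1]`, so the series is continuous there and the identity extends
to the endpoints. Finally `π - arccos α = π/2 + arcsin α`.
-/

open Set

theorem Ring.multichoose_succ_mul {K : Type*} [Field K] [CharZero K] (r : K) (k : ℕ) :
    Ring.multichoose r (k + 1) * (k + 1) = Ring.multichoose r k * (r + k) := by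
  have h (n : ℕ) : Ring.multichoose r n = (ascPochhammer K n).eval r / n.factorial := by
    rw [eq_div_iff (Nat.cast_ne_zero.2 n.factorial_ne_zero),
      ← Polynomial.ascPochhammer_smeval_eq_eval,
      ← Ring.factorial_nsmul_multichoose_eq_ascPochhammer, nsmul_eq_mul, mul_comm]
  rw [h, h, ascPochhammer_succ_eval, Nat.factorial_succ]
  push_cast
  field_simp

theorem Ring.multichoose_one_half_eq (k : ℕ) :
    Ring.multichoose (1 / 2 : ℝ) k =
      (Nat.doubleFactorial (2 * k - 1) : ℝ) ^ 2 / (2 * k).factorial := by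
  induction k with
  | zero => simp
  | succ k ih =>
    have hrec := Ring.multichoose_succ_mul (1 / 2 : ℝ) k
    rw [ih] at hrec
    rw [show 2 * (k + 1) - 1 = 2 * k + 1 by omega, show 2 * (k + 1) = 2 * k + 1 + 1 by omega,
      Nat.doubleFactorial_add_one, Nat.factorial_succ, Nat.factorial_succ,
      eq_div_iff (by positivity)]
    push_cast
    field_simp at hrec ⊢
    linear_combination hrec

theorem Ring.abs_multichoose_one_half_le_one (k : ℕ) : |Ring.multichoose (1 / 2 : ℝ) k| ≤ 1 := by
  induction k with
  | zero => simp
  | succ k ih =>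
    have hrec := congrArg abs (Ring.multichoose_succ_mul (1 / 2 : ℝ) k)
    rw [abs_mul, abs_mul, abs_of_pos (show (0 : ℝ) < k + 1 by positivity),
      abs_of_pos (show (0 : ℝ) < 1 / 2 + k by positivity)] at hrec
    nlinarith [abs_nonneg (Ring.multichoose (1 / 2 : ℝ) (k + 1))]

theorem hasSum_one_div_sqrt_one_sub_sq {x : ℝ} (hx : |x| < 1) :
    HasSum (fun k ↦ Ring.multichoose (1 / 2 : ℝ) k * x ^ (2 * k)) (1 / √(1 - x ^ 2)) := by
  have hx2 : x ^ 2 ∈ Metric.eball (0 : ℝ) 1 := by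
    rw [Metric.mem_eball, edist_zero_right, enorm_eq_nnnorm, ENNReal.coe_lt_one_iff,
      ← NNReal.coe_lt_one, coe_nnnorm, norm_pow, Real.norm_eq_abs]
    exact pow_lt_one₀ (abs_nonneg x) hx two_ne_zero
  have h := (one_div_one_sub_rpow_hasFPowerSeriesOnBall_zero (1 / 2)).hasSum hx2
  simp only [FormalMultilinearSeries.ofScalars_apply_eq, zero_add, smul_eq_mul] at h
  rw [Real.sqrt_eq_rpow]
  simpa only [← Ring.multichoose_eq, ← pow_mul, mul_comm] using h

theorem hasDerivAt_tsum_div_succ_mul_pow {d : ℕ → ℝ} (hd : ∀ k, |d k| ≤ 1) {n : ℕ → ℕ}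
    (hn : ∀ k, k ≤ n k) {x : ℝ} (hx : |x| < 1) :
    HasDerivAt (fun y ↦ ∑' k, d k / (n k + 1) * y ^ (n k + 1)) (∑' k, d k * x ^ n k) x := by
  obtain ⟨r, hxr, hr1⟩ := exists_between hx
  have hr0 : 0 < r := (abs_nonneg x).trans_lt hxr
  refine hasDerivAt_tsum_of_isPreconnected (t := Ioo (-r) r) (y₀ := 0)
    (g := fun k y ↦ d k / (n k + 1) * y ^ (n k + 1)) (g' := fun k y ↦ d k * y ^ n k)
    (summable_geometric_of_lt_one hr0.le hr1) isOpen_Ioo isPreconnected_Ioo (fun k y _ ↦ ?_)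
    (fun k y hy ↦ ?_) ⟨by linarith, by linarith⟩ (by simp) (abs_lt.1 hxr)
  · refine ((hasDerivAt_pow (n k + 1) y).const_mul (d k / (n k + 1))).congr_deriv ?_
    rw [Nat.add_sub_cancel, Nat.cast_succ]
    field_simp
  · calc ‖d k * y ^ n k‖ = |d k| * |y| ^ n k := by
          rw [norm_mul, norm_pow, Real.norm_eq_abs, Real.norm_eq_abs]
      _ ≤ 1 * r ^ n k := by gcongr; exacts [hd k, abs_le.2 ⟨hy.1.le, hy.2.le⟩]
      _ ≤ r ^ k := by rw [one_mul]; exact pow_le_pow_of_le_one hr0.le hr1.le (hn k)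

theorem IsOpen.eq_of_hasDerivAt_of_eq {𝕜 G : Type*} [RCLike 𝕜] [NormedAddCommGroup G]
    [NormedSpace 𝕜 G] {s : Set 𝕜} (hs : IsOpen s) (hs' : IsPreconnected s) {f g f' : 𝕜 → G}
    (hf : ∀ y ∈ s, HasDerivAt f (f' y) y) (hg : ∀ y ∈ s, HasDerivAt g (f' y) y) {x₀ x : 𝕜}
    (hx₀ : x₀ ∈ s) (hx : x ∈ s) (h : f x₀ = g x₀) : f x = g x :=
  hs.eqOn_of_deriv_eq hs' (fun y hy ↦ (hf y hy).differentiableAt.differentiableWithinAt)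
    (fun y hy ↦ (hg y hy).differentiableAt.differentiableWithinAt)
    (fun y hy ↦ (hf y hy).deriv.trans (hg y hy).deriv.symm) hx₀ h hx

theorem arcsin_eq_tsum {x : ℝ} (hx : |x| < 1) :
    arcsin x = ∑' k : ℕ, Ring.multichoose (1 / 2 : ℝ) k / (2 * k + 1) * x ^ (2 * k + 1) := by
  apply isOpen_Ioo.eq_of_hasDerivAt_of_eq isPreconnected_Ioo (f' := fun y ↦ 1 / √(1 - y ^ 2))
    (fun y hy ↦ hasDerivAt_arcsin hy.1.ne' hy.2.ne) _ (x₀ := 0) (by simp) (abs_lt.1 hx)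
  · simp
  · intro y hy
    have h := hasDerivAt_tsum_div_succ_mul_pow Ring.abs_multichoose_one_half_le_one (n := (2 * ·))
      (fun k ↦ by omega) (abs_lt.2 hy)
    rw [(hasSum_one_div_sqrt_one_sub_sq (abs_lt.2 hy)).tsum_eq] at h
    push_cast at h
    exact h

theorem sqrt_one_sub_sq_add_mul_arcsin_eq_of_abs_lt {x : ℝ} (hx : |x| < 1) :
    √(1 - x ^ 2) + x * arcsin x =
      1 + ∑' k : ℕ,
        Ring.multichoose (1 / 2 : ℝ) k / ((2 * k + 1) * (2 * k + 2)) * x ^ (2 * k + 2) := by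
  apply isOpen_Ioo.eq_of_hasDerivAt_of_eq isPreconnected_Ioo (f' := arcsin) _ _ (x₀ := 0)
    (by simp) (abs_lt.1 hx)
  · simp
  · intro y hy
    have hs : 0 < 1 - y ^ 2 := by nlinarith [hy.1, hy.2]
    have hsqrt := ((hasDerivAt_pow 2 y).const_sub 1).sqrt hs.ne'
    refine (hsqrt.add ((hasDerivAt_id' y).mul (hasDerivAt_arcsin hy.1.ne' hy.2.ne))).congr_deriv ?_
    have : 0 < √(1 - y ^ 2) := Real.sqrt_pos.2 hs
    field_simp
    ring
  · intro y hy
    have hd (k : ℕ) : |Ring.multichoose (1 / 2 : ℝ) k / (2 * k + 1)| ≤ 1 := by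
      rw [abs_div, abs_of_pos (show (0 : ℝ) < 2 * k + 1 by positivity),
        div_le_one (by positivity)]
      linarith [Ring.abs_multichoose_one_half_le_one k, (k.cast_nonneg : (0 : ℝ) ≤ k)]
    have h := (hasDerivAt_tsum_div_succ_mul_pow hd (n := (2 * · + 1)) (fun k ↦ by omega)
      (abs_lt.2 hy)).const_add 1
    rw [← arcsin_eq_tsum (abs_lt.2 hy)] at h
    push_cast at h
    simpa only [div_div, add_assoc, one_add_one_eq_two] using h

theorem continuousOn_tsum_multichoose_half_mul_pow :
    ContinuousOn (fun x : ℝ ↦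
      ∑' k : ℕ, Ring.multichoose (1 / 2 : ℝ) k / ((2 * k + 1) * (2 * k + 2)) * x ^ (2 * k + 2))
      (Icc (-1) 1) := by
  refine continuousOn_tsum (fun k ↦ by fun_prop)
    ((summable_nat_add_iff 1).2 (Real.summable_one_div_nat_pow.2 one_lt_two)) fun k x hx ↦ ?_
  calc ‖Ring.multichoose (1 / 2 : ℝ) k / ((2 * k + 1) * (2 * k + 2)) * x ^ (2 * k + 2)‖
      = |Ring.multichoose (1 / 2 : ℝ) k| / ((2 * k + 1) * (2 * k + 2)) * |x| ^ (2 * k + 2) := by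
        simp only [norm_mul, norm_div, norm_pow, Real.norm_eq_abs]
        rw [abs_of_pos (by positivity : (0 : ℝ) < 2 * k + 1),
          abs_of_pos (by positivity : (0 : ℝ) < 2 * k + 2)]
    _ ≤ 1 / ((2 * k + 1) * (2 * k + 2)) * 1 := by
        gcongr
        exacts [Ring.abs_multichoose_one_half_le_one k, pow_le_one₀ (abs_nonneg x) (abs_le.2 hx)]
    _ ≤ 1 / ((k + 1 : ℕ) : ℝ) ^ 2 := by
        rw [mul_one]
        gcongr
        push_cast
        nlinarith

theorem sqrt_one_sub_sq_add_mul_arcsin_eq {x : ℝ} (hx : x ∈ Icc (-1) 1) :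
    √(1 - x ^ 2) + x * arcsin x =
      1 + ∑' k : ℕ,
        Ring.multichoose (1 / 2 : ℝ) k / ((2 * k + 1) * (2 * k + 2)) * x ^ (2 * k + 2) := by
  refine EqOn.of_subset_closure (s := Ioo (-1) 1)
    (fun y hy ↦ sqrt_one_sub_sq_add_mul_arcsin_eq_of_abs_lt (abs_lt.2 hy)) (by fun_prop)
    (continuousOn_tsum_multichoose_half_mul_pow.const_add 1) Ioo_subset_Icc_self
    (by rw [closure_Ioo (by norm_num)]) hx

theorem doubleFactorial_sq_div_factorial_eq (k : ℕ) :
    (Nat.doubleFactorial (2 * (k + 1) - 3) : ℝ) ^ 2 / (Nat.factorial (2 * (k + 1)) : ℝ) =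
      Ring.multichoose (1 / 2 : ℝ) k / ((2 * k + 1) * (2 * k + 2)) := by
  rw [Ring.multichoose_one_half_eq, show 2 * (k + 1) - 3 = 2 * k - 1 by omega,
    show 2 * (k + 1) = 2 * k + 1 + 1 by ring, Nat.factorial_succ, Nat.factorial_succ]
  push_cast
  field_simp
  ring

theorem gker_taylor_expansion (α : ℝ) (hα : α ∈ Set.Icc (-1 : ℝ) 1) :
    gker α = 1 / (2 * π) + α / 4 +
      ∑' k : ℕ, (1 / (2 * π)) *
        ((Nat.doubleFactorial (2 * (k + 1) - 3) : ℝ) ^ 2 / (Nat.factorial (2 * (k + 1)) : ℝ))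
          * α ^ (2 * (k + 1)) := by
  have hseries := eq_sub_of_add_eq' (sqrt_one_sub_sq_add_mul_arcsin_eq hα).symm
  simp_rw [doubleFactorial_sq_div_factorial_eq, mul_add_one, mul_assoc, tsum_mul_left, hseries]
  rw [gker, arccos_eq_pi_div_two_sub_arcsin]
  field_simp
  ring
end

section
/- The function g(α) = (1/(2π))(√(1−α²) + α(π − arccos α)) is strictly increasing on [−1,1]. -/
open Real

/-! On `(-1, 1)` the derivative of `√(1 - α²)` cancels the `α / √(1 - α²)` coming from
differentiating `arccos` in the second summand, so `2π g'(α) = π - arccos α`, which is positive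
for `α > -1`. -/

theorem hasDerivAt_sqrt_one_sub_sq {x : ℝ} (hx : x ^ 2 < 1) :
    HasDerivAt (fun y : ℝ => √(1 - y ^ 2)) (-x / √(1 - x ^ 2)) x := by
  have hpos : 0 < 1 - x ^ 2 := by linarith
  refine ((hasDerivAt_sqrt hpos.ne').comp x ((hasDerivAt_pow 2 x).const_sub 1)).congr_deriv ?_
  have : 0 < √(1 - x ^ 2) := sqrt_pos.2 hpos
  field_simp
  ring

theorem continuous_gker : Continuous gker := by
  unfold gker
  fun_prop

theorem hasDerivAt_gker {x : ℝ} (hx : x ∈ Set.Ioo (-1 : ℝ) 1) :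
    HasDerivAt gker ((1 / (2 * π)) * (π - arccos x)) x := by
  have hx2 : x ^ 2 < 1 := by nlinarith [hx.1, hx.2]
  have hsqrt : √(1 - x ^ 2) ≠ 0 := (sqrt_pos.2 (by linarith)).ne'
  have hmul : HasDerivAt (fun y : ℝ => y * (π - arccos y))
      (1 * (π - arccos x) + x * (0 - -(1 / √(1 - x ^ 2)))) x :=
    (hasDerivAt_id x).mul ((hasDerivAt_const x π).sub (hasDerivAt_arccos hx.1.ne' hx.2.ne))
  refine (((hasDerivAt_sqrt_one_sub_sq hx2).add hmul).const_mul (1 / (2 * π))).congr_deriv ?_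
  field_simp
  ring

theorem gker_strictMonoOn : StrictMonoOn gker (Set.Icc (-1 : ℝ) 1) := by
  refine strictMonoOn_of_deriv_pos (convex_Icc _ _) continuous_gker.continuousOn fun x hx => ?_
  rw [interior_Icc] at hx
  rw [(hasDerivAt_gker hx).deriv]
  have : 0 < π - arccos x := sub_pos.2 (arccos_lt_pi.2 hx.1)
  positivity
end

section
/- The function g(α) = (1/(2π))(√(1−α²) + α(π − arccos α)) is convex on [−1,1], satisfies g(1) = 1/2, g(−1) = 0, and g(0) = 1/(2π). -/
open Real

open Set

lemma hasDerivAt_sqrt_one_sub_sq_add_mul_arccos {x : ℝ} (hx₁ : -1 < x) (hx₂ : x < 1) :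
    HasDerivAt (fun y => √(1 - y ^ 2) + y * (π - arccos y)) (π - arccos x) x := by
  have hpos : 0 < 1 - x ^ 2 := by nlinarith
  have hsqrt : HasDerivAt (fun y => √(1 - y ^ 2)) (-(2 * x) / (2 * √(1 - x ^ 2))) x := by
    simpa using ((hasDerivAt_pow 2 x).const_sub 1).sqrt hpos.ne'
  have hmul : HasDerivAt (fun y => y * (π - arccos y))
      (1 * (π - arccos x) + x * (0 - -(1 / √(1 - x ^ 2)))) x :=
    (hasDerivAt_id' x).mul ((hasDerivAt_const x π).sub (hasDerivAt_arccos hx₁.ne' hx₂.ne))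
  refine (hsqrt.add hmul).congr_deriv ?_
  have : √(1 - x ^ 2) ≠ 0 := (sqrt_pos.2 hpos).ne'
  field_simp
  ring

lemma convexOn_sqrt_one_sub_sq_add_mul_arccos :
    ConvexOn ℝ (Icc (-1) 1) (fun y => √(1 - y ^ 2) + y * (π - arccos y)) := by
  refine MonotoneOn.convexOn_of_deriv (convex_Icc _ _) (by fun_prop) ?_ ?_ <;>
    rw [interior_Icc]
  · exact fun x hx =>
      (hasDerivAt_sqrt_one_sub_sq_add_mul_arccos hx.1 hx.2).differentiableAt.differentiableWithinAt
  · intro a ha b hb hab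
    rw [(hasDerivAt_sqrt_one_sub_sq_add_mul_arccos ha.1 ha.2).deriv,
      (hasDerivAt_sqrt_one_sub_sq_add_mul_arccos hb.1 hb.2).deriv]
    exact sub_le_sub_left (arccos_le_arccos hab) π

theorem gker_convex_and_values :
    ConvexOn ℝ (Set.Icc (-1 : ℝ) 1) gker ∧
    gker 1 = 1 / 2 ∧ gker (-1) = 0 ∧ gker 0 = 1 / (2 * π) := by
  refine ⟨convexOn_sqrt_one_sub_sq_add_mul_arccos.smul (by positivity), ?_, ?_, ?_⟩
  · simp only [gker, one_pow, sub_self, sqrt_zero, arccos_one, sub_zero, one_mul, zero_add]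
    field_simp
  · simp [gker]
  · simp [gker]
end

section
/- For the ETF value of the limit objective R̃_ETF(M) = M / (g(1) + (M−1) g(−1/(M−1))) with g the ReLU Gaussian kernel, the sequence R̃_ETF(M) is increasing in M and R̃_ETF(M) → 2π as M → ∞. -/
/-
With `x = 1/(M-1)` and `arccos = π/2 - arcsin`, the denominator of `RETF M` is `etfDenom M / (2π)`,
where `etfDenom m = π/2 + √(m² - 2m) + arcsin (1/(m-1))`; thus `RETF M = 2π M / etfDenom M`.
Since `m - 2 ≤ etfDenom m ≤ m + π`, `etfDenom M / M → 1` and `RETF M → 2π`.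
Monotonicity is `m etfDenom (m+1) ≤ (m+1) etfDenom m`. For `m ≥ 3` it follows from Jordan's
inequality `m arcsin (1/m) ≤ π/2`, from `x ≤ arcsin x`, and from the fact that `m √(m² - 1)` and
`(m+1) √(m² - 2m)` have squares differing by `2m(m+1)` while their sum is at least `2m(m-1)`.
The case `m = 2` is a numerical check.
-/

open Real Filter

/-- The value of the limit objective at the ETF configuration with `M` neurons. -/
noncomputable def RETF (M : ℕ) : ℝ :=
  (M : ℝ) / (gker 1 + ((M : ℝ) - 1) * gker (-1 / ((M : ℝ) - 1)))

open Topology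

theorem arcsin_le_pi_div_two_mul {x : ℝ} (hx₀ : 0 ≤ x) (hx₁ : x ≤ 1) : arcsin x ≤ π / 2 * x := by
  have hpi := pi_pos
  rw [arcsin_le_iff_le_sin ⟨by linarith, hx₁⟩ ⟨by nlinarith, by nlinarith⟩]
  calc x = 2 / π * (π / 2 * x) := by field_simp
    _ ≤ sin (π / 2 * x) := mul_le_sin (by positivity) (by nlinarith)

theorem self_le_arcsin {x : ℝ} (hx₀ : 0 ≤ x) (hx₁ : x ≤ 1) : x ≤ arcsin x := by
  have hpi := pi_gt_three
  rw [le_arcsin_iff_sin_le ⟨by linarith, by linarith⟩ ⟨by linarith, hx₁⟩]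
  exact sin_le hx₀

theorem sub_le_div_of_sq_sub_sq_le {a b c s : ℝ} (hs : 0 < s) (hsum : s ≤ a + b) (hc : 0 ≤ c)
    (h : a ^ 2 - b ^ 2 ≤ c) : a - b ≤ c / s := by
  rw [le_div_iff₀ hs]
  rcases le_total a b with hab | hab <;> nlinarith

theorem gker_one : gker 1 = 1 / 2 := by
  simp only [gker, one_pow, sub_self, sqrt_zero, arccos_one, sub_zero, zero_add, one_mul]
  field_simp

theorem gker_eq_arcsin (α : ℝ) : gker α = (√(1 - α ^ 2) + α * (π / 2 + arcsin α)) / (2 * π) := by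
  rw [gker, arccos_eq_pi_div_two_sub_arcsin]
  ring

noncomputable def etfDenom (m : ℝ) : ℝ := π / 2 + √(m ^ 2 - 2 * m) + arcsin (1 / (m - 1))

theorem gker_one_add_sub_one_mul_gker {m : ℝ} (hm : 1 < m) :
    gker 1 + (m - 1) * gker (-1 / (m - 1)) = etfDenom m / (2 * π) := by
  have hm0 : m - 1 ≠ 0 := by linarith
  have hsqrt : (m - 1) * √(1 - (-1 / (m - 1)) ^ 2) = √(m ^ 2 - 2 * m) := by
    have : m ^ 2 - 2 * m = (m - 1) ^ 2 * (1 - (-1 / (m - 1)) ^ 2) := by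
      field_simp
      ring
    rw [this, sqrt_mul (sq_nonneg _), sqrt_sq (by linarith)]
  rw [gker_one, gker_eq_arcsin, neg_div, arcsin_neg, etfDenom, ← hsqrt]
  field_simp
  ring

theorem RETF_eq_div_etfDenom {M : ℕ} (hM : 2 ≤ M) : RETF M = 2 * π * M / etfDenom M := by
  have hm : (1 : ℝ) < M := by exact_mod_cast hM
  rw [RETF, gker_one_add_sub_one_mul_gker hm, div_div_eq_mul_div, mul_comm]

theorem pi_div_two_le_etfDenom {m : ℝ} (hm : 1 ≤ m) : π / 2 ≤ etfDenom m := by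
  have : 0 ≤ arcsin (1 / (m - 1)) := arcsin_nonneg.2 (one_div_nonneg.2 (by linarith))
  have := sqrt_nonneg (m ^ 2 - 2 * m)
  rw [etfDenom]
  linarith

theorem etfDenom_mem_Icc {m : ℝ} (hm : 2 ≤ m) : etfDenom m ∈ Set.Icc (m - 2) (m + π) := by
  have hsqrt_ge : m - 2 ≤ √(m ^ 2 - 2 * m) :=
    (le_sqrt (by linarith) (by nlinarith)).2 (by nlinarith)
  have hsqrt_le : √(m ^ 2 - 2 * m) ≤ m := (sqrt_le_left (by linarith)).2 (by nlinarith)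
  have : 0 ≤ arcsin (1 / (m - 1)) := arcsin_nonneg.2 (one_div_nonneg.2 (by linarith))
  have := arcsin_le_pi_div_two (1 / (m - 1))
  constructor <;> rw [etfDenom] <;> linarith [pi_pos]

theorem tendsto_etfDenom_div_atTop : Tendsto (fun m => etfDenom m / m) atTop (𝓝 1) := by
  have hlower : Tendsto (fun m : ℝ => 1 - 2 / m) atTop (𝓝 1) := by
    simpa using (tendsto_const_nhds.div_atTop tendsto_id).const_sub (1 : ℝ)
  have hupper : Tendsto (fun m : ℝ => 1 + π / m) atTop (𝓝 1) := by
    simpa using (tendsto_const_nhds.div_atTop tendsto_id).const_add (1 : ℝ)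
  refine tendsto_of_tendsto_of_tendsto_of_le_of_le' hlower hupper ?_ ?_ <;>
    filter_upwards [eventually_ge_atTop 2] with m hm <;>
    obtain ⟨hD_ge, hD_le⟩ := etfDenom_mem_Icc hm
  · rw [one_sub_div (by positivity)]
    gcongr
  · rw [one_add_div (by positivity)]
    gcongr

theorem sqrt_gap_le {m : ℝ} (hm : 3 ≤ m) :
    m * √(m ^ 2 - 1) - (m + 1) * √(m ^ 2 - 2 * m) ≤ (m + 1) / (m - 1) := by
  have ha2 : (m * √(m ^ 2 - 1)) ^ 2 = m ^ 2 * (m ^ 2 - 1) := by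
    rw [mul_pow, sq_sqrt (by nlinarith)]
  have hb2 : ((m + 1) * √(m ^ 2 - 2 * m)) ^ 2 = (m + 1) ^ 2 * (m ^ 2 - 2 * m) := by
    rw [mul_pow, sq_sqrt (by nlinarith)]
  have ha : m * (m - 1) ≤ m * √(m ^ 2 - 1) :=
    le_of_pow_le_pow_left₀ two_ne_zero (by positivity) (by rw [ha2]; nlinarith)
  have hb : m * (m - 1) ≤ (m + 1) * √(m ^ 2 - 2 * m) :=
    le_of_pow_le_pow_left₀ two_ne_zero (by positivity) (by rw [hb2]; nlinarith)
  calc _ ≤ 2 * m * (m + 1) / (2 * m * (m - 1)) :=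
        sub_le_div_of_sq_sub_sq_le (by nlinarith) (by linarith) (by nlinarith)
          (by rw [ha2, hb2]; linarith)
    _ = (m + 1) / (m - 1) := by field_simp

theorem mul_etfDenom_add_one_le {m : ℝ} (hm : 3 ≤ m) :
    m * etfDenom (m + 1) ≤ (m + 1) * etfDenom m := by
  have hjordan : m * arcsin (1 / m) ≤ π / 2 := by
    calc m * arcsin (1 / m) ≤ m * (π / 2 * (1 / m)) := by
          gcongr
          exact arcsin_le_pi_div_two_mul (by positivity)
            ((div_le_one₀ (by linarith)).2 (by linarith))
      _ = π / 2 := by field_simp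
  have harcsin : (m + 1) / (m - 1) ≤ (m + 1) * arcsin (1 / (m - 1)) := by
    rw [div_eq_mul_one_div]
    gcongr
    exact self_le_arcsin (one_div_nonneg.2 (by linarith))
      ((div_le_one₀ (by linarith)).2 (by linarith))
  have hgap := sqrt_gap_le hm
  have hsq : (m + 1) ^ 2 - 2 * (m + 1) = m ^ 2 - 1 := by ring
  rw [etfDenom, etfDenom, hsq, add_sub_cancel_right]
  linarith

theorem two_mul_etfDenom_three_le : 2 * etfDenom 3 ≤ 3 * etfDenom 2 := by
  have hsqrt : √3 ≤ 2 := (sqrt_le_left (by norm_num)).2 (by norm_num)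
  have harcsin : arcsin (1 / 2) ≤ π / 2 * (1 / 2) :=
    arcsin_le_pi_div_two_mul (by norm_num) (by norm_num)
  norm_num [etfDenom]
  norm_num at harcsin
  linarith [pi_gt_three]

theorem RETF_le_RETF_succ {M : ℕ} (hM : 2 ≤ M) : RETF M ≤ RETF (M + 1) := by
  have hstep : (M : ℝ) * etfDenom (M + 1) ≤ (M + 1) * etfDenom M := by
    rcases hM.eq_or_lt with rfl | hM3
    · exact_mod_cast two_mul_etfDenom_three_le
    · exact mul_etfDenom_add_one_le (by exact_mod_cast hM3)
  have hm : (1 : ℝ) ≤ M := by exact_mod_cast (by omega : 1 ≤ M)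
  have hD : 0 < etfDenom M := by linarith [pi_div_two_le_etfDenom hm, pi_pos]
  have hD' : 0 < etfDenom (M + 1) := by
    linarith [pi_div_two_le_etfDenom (by linarith : (1 : ℝ) ≤ M + 1), pi_pos]
  rw [RETF_eq_div_etfDenom hM, RETF_eq_div_etfDenom (by omega), Nat.cast_succ,
    div_le_div_iff₀ hD hD']
  nlinarith [pi_pos]

theorem tendsto_RETF_atTop : Tendsto RETF atTop (𝓝 (2 * π)) := by
  have h := (tendsto_const_nhds (x := 2 * π)).div
    (tendsto_etfDenom_div_atTop.comp tendsto_natCast_atTop_atTop) one_ne_zero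
  rw [div_one] at h
  refine h.congr' ?_
  filter_upwards [eventually_ge_atTop 2] with M hM
  rw [RETF_eq_div_etfDenom hM, Pi.div_apply, Function.comp_apply, div_div_eq_mul_div]

theorem RETF_increasing_tendsto :
    (∀ M : ℕ, 2 ≤ M → RETF M ≤ RETF (M + 1)) ∧
    Tendsto RETF atTop (nhds (2 * π)) :=
  ⟨fun _ => RETF_le_RETF_succ, tendsto_RETF_atTop⟩
end
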